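/- For conservative k-of-n testing, the expected cost of strategy T_k(π) given by permutation π with costs c_i equals ∑_{j=1}^n c_{π(j)}·P(∑_{ℓ=1}^{j-1}(1-x_{π(ℓ)}) ≤ k-1), and this is minimized over permutations π by ordering tests in increasing order of c_i/(1-p_i). -/

import Mathlib

/-!
By linearity of expectation the cost of the order `σ` is `∑ⱼ c_{σ j} · P(σ j is performed)`,
and `σ j` is performed exactly when fewer than `k` zeros occur among the earlier tests.
Writing `Z_S` for the number of zeros among the tests in `S`, for `a ∉ S` we have
`P(Z_{S ∪ {a}} ≤ k-1) = P(Z_S ≤ k-1) - (1 - p_a) P(Z_S = k-1)`, so exchanging adjacent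
tests `a, b` (preceded by the set `S`) changes the cost by
`P(Z_S = k-1) · (c_b (1 - p_a) - c_a (1 - p_b))`: moving the smaller ratio `c/(1-p)` forward
never hurts, and finitely many such exchanges reach the sorted order.
-/

open Finset

noncomputable def wt {n : ℕ} (p : Fin n → ℝ) (x : Fin n → Bool) : ℝ :=
  ∏ i, if x i then p i else 1 - p i

open scoped Classical in
/-- Probability of an event under the product Bernoulli distribution with parameters `p`. -/
noncomputable def pr {n : ℕ} (p : Fin n → ℝ) (E : (Fin n → Bool) → Prop) : ℝ :=
  ∑ x ∈ Finset.univ.filter E, wt p x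

/-- Number of zeros (failed tests) in an outcome vector. -/
def zeros {n : ℕ} (x : Fin n → Bool) : ℕ := ∑ i, if x i then 0 else 1

/-- Binary decision trees over `n` tests. -/
inductive DTree (n : ℕ) : Type
  | leaf (b : Bool) : DTree n
  | node (i : Fin n) (l r : DTree n) : DTree n

def DTree.eval {n : ℕ} : DTree n → (Fin n → Bool) → Bool
  | .leaf b, _ => b
  | .node i l r, x => if x i then DTree.eval r x else DTree.eval l x

/-- The set of tests performed on item `x` by strategy `T`. -/
def DTree.tests {n : ℕ} : DTree n → (Fin n → Bool) → Finset (Fin n)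
  | .leaf _, _ => ∅
  | .node i l r, x => insert i (if x i then DTree.tests r x else DTree.tests l x)

/-- The number of tests (path length) performed on item `x` by strategy `T`. -/
def DTree.depthOn {n : ℕ} : DTree n → (Fin n → Bool) → ℕ
  | .leaf _, _ => 0
  | .node i l r, x => (if x i then DTree.depthOn r x else DTree.depthOn l x) + 1

/-- `gprob p T i` : probability that test `i` is performed on a random item under strategy `T`. -/
noncomputable def gprob {n : ℕ} (p : Fin n → ℝ) (T : DTree n) (i : Fin n) : ℝ :=
  pr p (fun x => i ∈ T.tests x)

/-- A conservative `k`-of-`n` strategy: tests along each path are distinct, the strategy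
computes the `k`-of-`n` function, items with fewer than `k` zeros undergo all `n` tests,
and items with at least `k` zeros are tested exactly until `k` zeros are observed. -/
def Conservative {n : ℕ} (k : ℕ) (T : DTree n) : Prop :=
  (∀ x, T.depthOn x = (T.tests x).card) ∧
  (∀ x : Fin n → Bool, T.eval x = decide (zeros x < k)) ∧
  (∀ x, zeros x < k → T.tests x = Finset.univ) ∧
  (∀ x, k ≤ zeros x → ((T.tests x).filter (fun i => x i = false)).card = k)

/-- The conservative strategy that performs the listed tests in order until `k` zeros
have been observed or the list is exhausted. -/
def permTree (n : ℕ) : ℕ → List (Fin n) → DTree n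
  | 0, _ => .leaf false
  | _ + 1, [] => .leaf true
  | k + 1, i :: rest => .node i (permTree n k rest) (permTree n (k + 1) rest)

/-- The conservative `k`-of-`n` strategy following the order `π 0, π 1, …`. -/
def permStrat {n : ℕ} (k : ℕ) (π : Equiv.Perm (Fin n)) : DTree n :=
  permTree n k ((List.finRange n).map π)

open Function Equiv

section Bernoulli

variable {n : ℕ} (p : Fin n → ℝ)

open scoped Classical in
lemma pr_eq_sum_ite (E : (Fin n → Bool) → Prop) :
    pr p E = ∑ x, if E x then wt p x else 0 :=
  sum_filter _ _

lemma pr_congr {E E' : (Fin n → Bool) → Prop} (h : ∀ x, E x ↔ E' x) : pr p E = pr p E' := by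
  rw [funext fun x => propext (h x)]

lemma pr_nonneg (hp : ∀ i, 0 ≤ p i ∧ p i ≤ 1) (E : (Fin n → Bool) → Prop) : 0 ≤ pr p E := by
  refine sum_nonneg fun x _ => prod_nonneg fun i _ => ?_
  split_ifs <;> linarith [hp i]

lemma wt_update_mul (x : Fin n → Bool) (a : Fin n) (b : Bool) :
    wt p (update x a b) * (if x a then p a else 1 - p a)
      = wt p x * (if b then p a else 1 - p a) := by
  have key : ∀ y : Fin n → Bool, wt p y
      = (if y a then p a else 1 - p a) * ∏ i ∈ univ.erase a, if y i then p i else 1 - p i :=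
    fun y => (mul_prod_erase univ _ (mem_univ a)).symm
  rw [key, key x, prod_congr rfl fun i hi => by rw [update_of_ne (ne_of_mem_erase hi)],
    update_self]
  ring

lemma pr_and_eq_false {a : Fin n} {E : (Fin n → Bool) → Prop}
    (hE : ∀ x b, E (update x a b) ↔ E x) :
    pr p (fun x => E x ∧ x a = false) = (1 - p a) * pr p E := by
  classical
  have hsplit :
      pr p E = pr p (fun x => E x ∧ x a = false) + pr p (fun x => E x ∧ x a = true) := by
    simp only [pr_eq_sum_ite, ← sum_add_distrib]
    refine sum_congr rfl fun x _ => ?_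
    cases x a <;> simp
  have hflip : (1 - p a) * pr p (fun x => E x ∧ x a = true)
      = p a * pr p (fun x => E x ∧ x a = false) := by
    have hinv : Involutive fun x : Fin n → Bool => update x a (!x a) := fun x => by simp
    simp only [pr_eq_sum_ite, mul_sum]
    refine (Fintype.sum_bijective _ hinv.bijective _ _ fun x => ?_).symm
    simp only [hE, update_self]
    cases hx : x a
    · have h := wt_update_mul p x a true
      simp only [hx, Bool.false_eq_true, if_false, if_true] at h
      by_cases hEx : E x <;>
        simp only [hEx, Bool.not_false, and_self, and_true, if_true, if_false, mul_zero]
      linarith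
    · simp
  linear_combination (p a - 1) * hsplit - hflip

end Bernoulli

def zerosIn {n : ℕ} (S : Finset (Fin n)) (x : Fin n → Bool) : ℕ :=
  ∑ i ∈ S, if x i then 0 else 1

lemma zerosIn_update {n : ℕ} {S : Finset (Fin n)} {a : Fin n} (ha : a ∉ S) (x : Fin n → Bool)
    (b : Bool) : zerosIn S (update x a b) = zerosIn S x :=
  sum_congr rfl fun i hi => by rw [update_of_ne (ne_of_mem_of_not_mem hi ha)]

lemma zerosIn_insert {n : ℕ} {S : Finset (Fin n)} {a : Fin n} (ha : a ∉ S) (x : Fin n → Bool) :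
    zerosIn (insert a S) x = (if x a then 0 else 1) + zerosIn S x :=
  sum_insert ha

lemma pr_zerosIn_insert_le {n : ℕ} (p : Fin n → ℝ) {S : Finset (Fin n)} {a : Fin n} (ha : a ∉ S)
    (m : ℕ) :
    pr p (fun x => zerosIn (insert a S) x ≤ m)
      = pr p (fun x => zerosIn S x ≤ m) - (1 - p a) * pr p (fun x => zerosIn S x = m) := by
  rw [← pr_and_eq_false p fun x b => by rw [zerosIn_update ha], eq_sub_iff_add_eq]
  simp only [pr_eq_sum_ite, ← sum_add_distrib]
  refine sum_congr rfl fun x _ => ?_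
  rw [zerosIn_insert ha]
  cases x a <;> simp only [Bool.false_eq_true, Bool.true_eq_false, if_true, if_false, and_true,
    and_false, zero_add] <;> split_ifs <;> first | ring1 | omega

lemma sum_filter_lt_succ {M : Type*} [AddCommMonoid M] {m : ℕ} (g : Fin (m + 1) → M) (j : Fin m) :
    ∑ ℓ ∈ univ.filter (· < j.succ), g ℓ = g 0 + ∑ ℓ ∈ univ.filter (· < j), g ℓ.succ := by
  simp only [sum_filter, Fin.sum_univ_succ, Fin.succ_pos, if_true, Fin.succ_lt_succ_iff]

lemma mem_tests_permTree_ofFn {n m : ℕ} {f : Fin m → Fin n} (hf : Injective f)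
    (x : Fin n → Bool) (j : Fin m) (k : ℕ) :
    f j ∈ (permTree n k (List.ofFn f)).tests x
      ↔ (∑ ℓ ∈ univ.filter (· < j), if x (f ℓ) then 0 else 1) < k := by
  induction m generalizing k with
  | zero => exact j.elim0
  | succ m ih =>
    rcases k with _ | k
    · simp [permTree, DTree.tests]
    rw [List.ofFn_succ]
    induction j using Fin.cases with
    | zero => simp [permTree, DTree.tests]
    | succ j =>
      have hne : f j.succ ≠ f 0 := hf.ne (Fin.succ_ne_zero j)
      rw [sum_filter_lt_succ]
      have hsub := ih (f := fun i => f i.succ) (hf.comp (Fin.succ_injective m)) j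
      cases hx : x (f 0)
      · simp only [permTree, DTree.tests, hx, Bool.false_eq_true, if_false, mem_insert, hne,
          hsub, false_or]
        omega
      · simp only [permTree, DTree.tests, hx, if_true, mem_insert, hne, hsub, false_or, zero_add,
          Order.lt_add_one_iff]

lemma mem_tests_permStrat {n : ℕ} (k : ℕ) (σ : Perm (Fin n)) (x : Fin n → Bool) (j : Fin n) :
    σ j ∈ (permStrat k σ).tests x
      ↔ (∑ ℓ ∈ univ.filter (· < j), if x (σ ℓ) then 0 else 1) < k := by
  rw [permStrat, ← List.ofFn_eq_map]
  exact mem_tests_permTree_ofFn σ.injective x j k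

open scoped Classical in
lemma sum_wt_mul_sum_tests {n : ℕ} (p c : Fin n → ℝ) (T : DTree n) :
    ∑ x, wt p x * ∑ i ∈ T.tests x, c i = ∑ i, c i * gprob p T i := by
  simp only [gprob, pr, mul_sum]
  rw [sum_comm' (t' := univ) (s' := fun i => univ.filter (i ∈ T.tests ·)) fun x i => by simp]
  simp only [mul_comm]
  congr!

lemma sum_mul_comp_swap {n : ℕ} (g : Fin n → ℤ) {u v : Fin n} (huv : u ≠ v) :
    ∑ i : Fin n, (i : ℤ) * g (swap u v i)
      = ∑ i : Fin n, (i : ℤ) * g i + ((v : ℤ) - u) * (g u - g v) := by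
  have hreindex :
      ∑ i : Fin n, (i : ℤ) * g (swap u v i) = ∑ i : Fin n, (swap u v i : ℤ) * g i := by
    rw [← Equiv.sum_comp (swap u v) fun i => (swap u v i : ℤ) * g i]
    simp only [swap_apply_self]
  rw [hreindex, ← sub_eq_iff_eq_add', ← sum_sub_distrib,
    Fintype.sum_eq_add u v huv fun i hi => by rw [swap_apply_of_ne_of_ne hi.1 hi.2, sub_self]]
  simp only [swap_apply_left, swap_apply_right]
  ring

lemma Equiv.Perm.eq_one_of_forall_covBy_le {n : ℕ} (ρ : Perm (Fin n))
    (h : ∀ u v : Fin n, u ⋖ v → ρ u ≤ ρ v) : ρ = 1 := by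
  have hρ : StrictMono ρ :=
    ((monotone_iff_forall_covBy ρ).2 h).strictMono_of_injective ρ.injective
  ext i
  exact congrArg (fun e : Fin n ≃o Fin n => (e i : ℕ))
    (Subsingleton.elim (hρ.orderIsoOfSurjective ρ ρ.surjective) (OrderIso.refl _))

theorem le_of_adjacent_swap_le {α : Type*} [Preorder α] {n : ℕ} (f : Perm (Fin n) → α)
    (π : Perm (Fin n))
    (h : ∀ τ : Perm (Fin n), ∀ u v : Fin n, u ⋖ v → π⁻¹ (τ v) < π⁻¹ (τ u) →
      f (τ * swap u v) ≤ f τ)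
    (σ : Perm (Fin n)) : f π ≤ f σ := by
  classical
  -- `Φ` strictly increases under each admissible swap, so a maximizer of `Φ` among the
  -- `τ` with `f τ ≤ f σ` admits none, i.e. it is `π`.
  let Φ : Perm (Fin n) → ℤ := fun τ => ∑ i : Fin n, (i : ℤ) * (π⁻¹ (τ i) : ℤ)
  obtain ⟨τ, hτ, hmax⟩ := (univ.filter (f · ≤ f σ)).exists_max_image Φ ⟨σ, by simp⟩
  rw [mem_filter] at hτ
  suffices π⁻¹ * τ = 1 from inv_mul_eq_one.1 this ▸ hτ.2
  refine (π⁻¹ * τ).eq_one_of_forall_covBy_le fun u v huv => not_lt.1 fun hlt => ?_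
  have hswap := hmax (τ * swap u v) (mem_filter.2 ⟨mem_univ _, (h τ u v huv hlt).trans hτ.2⟩)
  have hΦ : Φ (τ * swap u v) = Φ τ + ((v : ℤ) - u) * ((π⁻¹ (τ u) : ℤ) - π⁻¹ (τ v)) :=
    sum_mul_comp_swap (fun i => (π⁻¹ (τ i) : ℤ)) huv.lt.ne
  have : (u : ℤ) < v := by exact_mod_cast huv.lt
  have : (π⁻¹ (τ v) : ℤ) < π⁻¹ (τ u) := by exact_mod_cast hlt
  nlinarith

section OrderCost

variable {n : ℕ}

def testsBefore (σ : Perm (Fin n)) (j : Fin n) : Finset (Fin n) :=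
  (univ.filter (· < j)).map σ.toEmbedding

lemma Fin.covBy_iff_val_add_one {u v : Fin n} : u ⋖ v ↔ (u : ℕ) + 1 = v := by
  rw [Fin.covBy_iff, Nat.covBy_iff_add_one_eq]

lemma testsBefore_mul_swap (σ : Perm (Fin n)) {u v j : Fin n} (huv : u ⋖ v) (hj : j ≠ v) :
    testsBefore (σ * swap u v) j = testsBefore σ j := by
  rw [Fin.covBy_iff_val_add_one] at huv
  ext i
  obtain ⟨i, rfl⟩ := σ.surjective i
  simp only [testsBefore, mem_map_equiv, mem_filter, mem_univ, true_and, Perm.mul_def,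
    symm_trans_apply, symm_apply_apply, symm_swap]
  rw [swap_apply_def]
  split_ifs <;> simp_all only [Fin.lt_def, Fin.ext_iff, ne_eq] <;> omega

lemma testsBefore_of_covBy (σ : Perm (Fin n)) {u v : Fin n} (huv : u ⋖ v) :
    testsBefore σ v = insert (σ u) (testsBefore σ u) := by
  rw [Fin.covBy_iff_val_add_one] at huv
  ext i
  obtain ⟨i, rfl⟩ := σ.surjective i
  simp only [testsBefore, mem_map_equiv, mem_filter, mem_univ, true_and, mem_insert,
    symm_apply_apply, σ.injective.eq_iff, Fin.lt_def, Fin.ext_iff]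
  omega

lemma apply_notMem_testsBefore (σ : Perm (Fin n)) {i j : Fin n} (h : j ≤ i) :
    σ i ∉ testsBefore σ j := by
  simp [testsBefore, h]

lemma zerosIn_testsBefore (σ : Perm (Fin n)) (j : Fin n) (x : Fin n → Bool) :
    zerosIn (testsBefore σ j) x = ∑ ℓ ∈ univ.filter (· < j), if x (σ ℓ) then 0 else 1 :=
  sum_map _ _ _

noncomputable def orderCost (p c : Fin n → ℝ) (m : ℕ) (σ : Perm (Fin n)) : ℝ :=
  ∑ j, c (σ j) * pr p (fun x => zerosIn (testsBefore σ j) x ≤ m)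

lemma orderCost_mul_swap_le (p c : Fin n → ℝ) (hp : ∀ i, 0 ≤ p i ∧ p i ≤ 1) (m : ℕ)
    (σ : Perm (Fin n)) {u v : Fin n} (huv : u ⋖ v)
    (hratio : c (σ v) * (1 - p (σ u)) ≤ c (σ u) * (1 - p (σ v))) :
    orderCost p c m (σ * swap u v) ≤ orderCost p c m σ := by
  have hinsert : ∀ a, a ∉ testsBefore σ u →
      pr p (fun x => zerosIn (insert a (testsBefore σ u)) x ≤ m)
        = pr p (fun x => zerosIn (testsBefore σ u) x ≤ m)
          - (1 - p a) * pr p (fun x => zerosIn (testsBefore σ u) x = m) :=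
    fun a ha => pr_zerosIn_insert_le p ha m
  have hdiff : orderCost p c m σ - orderCost p c m (σ * swap u v)
      = pr p (fun x => zerosIn (testsBefore σ u) x = m)
        * (c (σ u) * (1 - p (σ v)) - c (σ v) * (1 - p (σ u))) := by
    rw [orderCost, orderCost, ← sum_sub_distrib, Fintype.sum_eq_add u v huv.lt.ne fun j hj => by
      rw [Perm.mul_apply, swap_apply_of_ne_of_ne hj.1 hj.2, testsBefore_mul_swap σ huv hj.2,
        sub_self]]
    rw [testsBefore_mul_swap σ huv huv.lt.ne, testsBefore_of_covBy (σ * swap u v) huv,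
      testsBefore_of_covBy σ huv, testsBefore_mul_swap σ huv huv.lt.ne]
    simp only [Perm.mul_apply, swap_apply_left, swap_apply_right,
      hinsert _ (apply_notMem_testsBefore σ le_rfl),
      hinsert _ (apply_notMem_testsBefore σ huv.lt.le)]
    ring
  nlinarith [pr_nonneg p hp (fun x => zerosIn (testsBefore σ u) x = m)]

end OrderCost

theorem stmt_13_general (n k : ℕ) (hk : 1 ≤ k) (p c : Fin n → ℝ)
    (hp : ∀ i, 0 < p i ∧ p i < 1)
    (π : Equiv.Perm (Fin n))
    (hsort : ∀ i j : Fin n, i ≤ j →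
      c (π i) / (1 - p (π i)) ≤ c (π j) / (1 - p (π j))) :
    (∀ σ : Equiv.Perm (Fin n),
      ∑ x : Fin n → Bool, wt p x * ∑ i ∈ (permStrat k σ).tests x, c i
        = ∑ j : Fin n, c (σ j) *
            pr p (fun x => (∑ ℓ ∈ Finset.univ.filter (fun ℓ => ℓ < j),
              if x (σ ℓ) then 0 else 1) ≤ k - 1)) ∧
    (∀ σ : Equiv.Perm (Fin n),
      ∑ j : Fin n, c (π j) *
          pr p (fun x => (∑ ℓ ∈ Finset.univ.filter (fun ℓ => ℓ < j),
            if x (π ℓ) then 0 else 1) ≤ k - 1)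
        ≤ ∑ j : Fin n, c (σ j) *
            pr p (fun x => (∑ ℓ ∈ Finset.univ.filter (fun ℓ => ℓ < j),
              if x (σ ℓ) then 0 else 1) ≤ k - 1)) := by
  refine ⟨fun σ => ?_, fun σ => ?_⟩
  · rw [sum_wt_mul_sum_tests, ← Equiv.sum_comp σ]
    refine sum_congr rfl fun j _ => congrArg _ (pr_congr p fun x => ?_)
    rw [mem_tests_permStrat]
    omega
  · simp only [← zerosIn_testsBefore]
    refine le_of_adjacent_swap_le (orderCost p c (k - 1)) π (fun τ u v huv hlt => ?_) σ
    have hpos : ∀ i, 0 < 1 - p i := fun i => sub_pos.2 (hp i).2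
    refine orderCost_mul_swap_le p c (fun i => ⟨(hp i).1.le, (hp i).2.le⟩) _ τ huv ?_
    have := hsort _ _ hlt.le
    rwa [Perm.coe_inv, apply_symm_apply, apply_symm_apply,
      div_le_div_iff₀ (hpos _) (hpos _)] at this

/-- For conservative k-of-n testing: the expected cost of the strategy following order `σ`
equals `∑ⱼ c_{σ(j)}·P(fewer than k zeros among the first j-1 tests in the order)`, and this
expected cost is minimized over permutations by ordering tests by nondecreasing `cᵢ/(1-pᵢ)`. -/
theorem stmt_13 (n k : ℕ) (hk : 1 ≤ k) (p c : Fin n → ℝ)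
    (hp : ∀ i, 0 < p i ∧ p i < 1) (hc : ∀ i, 0 < c i)
    (π : Equiv.Perm (Fin n))
    (hsort : ∀ i j : Fin n, i ≤ j →
      c (π i) / (1 - p (π i)) ≤ c (π j) / (1 - p (π j))) :
    (∀ σ : Equiv.Perm (Fin n),
      ∑ x : Fin n → Bool, wt p x * ∑ i ∈ (permStrat k σ).tests x, c i
        = ∑ j : Fin n, c (σ j) *
            pr p (fun x => (∑ ℓ ∈ Finset.univ.filter (fun ℓ => ℓ < j),
              if x (σ ℓ) then 0 else 1) ≤ k - 1)) ∧
    (∀ σ : Equiv.Perm (Fin n),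
      ∑ j : Fin n, c (π j) *
          pr p (fun x => (∑ ℓ ∈ Finset.univ.filter (fun ℓ => ℓ < j),
            if x (π ℓ) then 0 else 1) ≤ k - 1)
        ≤ ∑ j : Fin n, c (σ j) *
            pr p (fun x => (∑ ℓ ∈ Finset.univ.filter (fun ℓ => ℓ < j),
              if x (σ ℓ) then 0 else 1) ≤ k - 1)) :=
  stmt_13_general n k hk p c hp π hsort
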